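/- Under the hypotheses that each U_e is differentiable, strongly convex with unique minimizer b_e, U_e(b_e) = 0, and b ∈ image(δ), trajectories of the gradient flow ẋ = −α L_F^{∇U} x (for any diffusivity α > 0) converge to the orthogonal projection of the initial condition onto the affine set δ⁺b + ker δ = ker L_F^{∇U}. -/

import Mathlib

/-!
Put `L := x(0)^‖ + δ⁺b` and `y := x - L`. The velocity `-α δᵀ ∇U(δx)` lies in
`image δᵀ = (ker δ)ᗮ`, so the `ker δ`-component of `x` is conserved and `y(t) ∈ (ker δ)ᗮ`;
also `δL = b`, so `δy = δx - b`. Strong convexity around the minimisers `b_e` gives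
`⟪δy, ∇U(δx)⟫ ≥ (μ/2)‖δy‖²` with `μ = min_e m_e`, and `δ` is bounded below on `(ker δ)ᗮ`,
`‖y‖ ≤ c‖δy‖`. Hence `d/dt ‖y‖² ≤ -(αμ/c²)‖y‖²`, and Grönwall gives exponential decay of `y`.
-/

open Filter

variable {C0 : Type*} [NormedAddCommGroup C0] [InnerProductSpace ℝ C0] [FiniteDimensional ℝ C0]
variable {E : Type*} [Fintype E]
variable (Es : E → Type*) [∀ e, NormedAddCommGroup (Es e)] [∀ e, InnerProductSpace ℝ (Es e)]
  [∀ e, FiniteDimensional ℝ (Es e)]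

/-- `δ⁺ b` for `b ∈ image δ`: the unique preimage of `b` lying in `(ker δ)ᗮ = image δᵀ`,
i.e. the Moore–Penrose pseudoinverse applied to `b`. -/
noncomputable def pinvVec {C1 : Type*} [NormedAddCommGroup C1] [InnerProductSpace ℝ C1]
    (δ : C0 →ₗ[ℝ] C1) (b : C1) (hb : b ∈ LinearMap.range δ) : C0 :=
  (Submodule.orthogonalProjectionOnto (LinearMap.ker δ)ᗮ hb.choose : C0)

open scoped RealInnerProductSpace Topology

theorem ConvexOn.add_apply_sub_le_of_hasFDerivAt {V : Type*} [NormedAddCommGroup V]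
    [NormedSpace ℝ V] {f : V → ℝ} {f' : StrongDual ℝ V} {z : V} (hf : ConvexOn ℝ Set.univ f)
    (hf' : HasFDerivAt f f' z) (w : V) : f z + f' (w - z) ≤ f w := by
  have hline : HasDerivAt (AffineMap.lineMap (k := ℝ) z w) (w - z) (0 : ℝ) := by
    simpa using AffineMap.hasDerivAt_lineMap (a := z) (b := w) (x := (0 : ℝ))
  have hf'' : HasFDerivAt f f' (AffineMap.lineMap (k := ℝ) z w 0) := by simpa using hf'
  have hφ : HasDerivAt (f ∘ AffineMap.lineMap (k := ℝ) z w) (f' (w - z)) 0 :=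
    hf''.comp_hasDerivAt 0 hline
  have hslope := (hf.comp_affineMap (AffineMap.lineMap (k := ℝ) z w)).le_slope_of_hasDerivAt
    (Set.mem_univ 0) (Set.mem_univ 1) one_pos hφ
  simp only [slope_def_field, Function.comp_apply, AffineMap.lineMap_apply_one,
    AffineMap.lineMap_apply_zero, sub_zero, div_one] at hslope
  linarith

section StrongConvexity

variable {F : Type*} [NormedAddCommGroup F] [InnerProductSpace ℝ F] {f : F → ℝ} {z : F}

theorem StrongConvexOn.add_apply_sub_add_le_of_hasFDerivAt {f' : StrongDual ℝ F} {m : ℝ}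
    (hf : StrongConvexOn Set.univ m f) (hf' : HasFDerivAt f f' z) (w : F) :
    f z + f' (w - z) + m / 2 * ‖w - z‖ ^ 2 ≤ f w := by
  have hg : HasFDerivAt (fun x ↦ f x - m / 2 * ‖x‖ ^ 2)
      (f' - (m / 2) • (2 • innerSL ℝ z)) z :=
    hf'.sub ((hasStrictFDerivAt_norm_sq z).hasFDerivAt.const_smul (m / 2))
  have := (strongConvexOn_iff_convex.mp hf).add_apply_sub_le_of_hasFDerivAt hg w
  simp only [sub_apply, smul_apply, innerSL_apply_apply,
    smul_eq_mul, nsmul_eq_mul, Nat.cast_ofNat, inner_sub_right,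
    real_inner_self_eq_norm_sq] at this
  rw [norm_sub_sq_real, real_inner_comm]
  linarith

theorem StrongConvexOn.mul_norm_sub_sq_le_inner_of_isMinOn [CompleteSpace F]
    {m : ℝ} {g b : F} (hf : StrongConvexOn Set.univ m f) (hg : HasGradientAt f g z)
    (hb : IsMinOn f Set.univ b) : m / 2 * ‖z - b‖ ^ 2 ≤ ⟪z - b, g⟫ := by
  have := hf.add_apply_sub_add_le_of_hasFDerivAt hg.hasFDerivAt b
  have hmin : f b ≤ f z := hb (Set.mem_univ z)
  rw [InnerProductSpace.toDual_apply_apply, norm_sub_rev, ← neg_sub, inner_neg_right,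
    real_inner_comm] at this
  linarith

end StrongConvexity

theorem exists_pos_forall_le_of_finite {ι : Type*} [Finite ι] {m : ι → ℝ} (hm : ∀ i, 0 < m i) :
    ∃ μ > 0, ∀ i, μ ≤ m i := by
  cases isEmpty_or_nonempty ι
  · exact ⟨1, one_pos, isEmptyElim⟩
  · obtain ⟨i, hi⟩ := Finite.exists_min m
    exact ⟨m i, hm i, hi⟩

theorem le_mul_exp_of_hasDerivAt_le_mul {φ φ' : ℝ → ℝ} {K t : ℝ}
    (hφ : ∀ s, HasDerivAt φ (φ' s) s) (hle : ∀ s, φ' s ≤ K * φ s) (ht : 0 ≤ t) :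
    φ t ≤ φ 0 * Real.exp (K * t) := by
  have := le_gronwallBound_of_liminf_deriv_right_le (f' := φ') (ε := 0) (b := t)
    (fun s _ ↦ (hφ s).continuousAt.continuousWithinAt)
    (fun s _ r hr ↦ by
      simpa [slope_def_field, div_eq_inv_mul] using
        (hφ s).hasDerivWithinAt.liminf_right_slope_le hr)
    le_rfl (fun s _ ↦ by simpa using hle s) t ⟨ht, le_rfl⟩
  simpa [gronwallBound_ε0] using this

theorem tendsto_zero_of_inner_hasDerivAt_le {F : Type*} [NormedAddCommGroup F]
    [InnerProductSpace ℝ F] {y v : ℝ → F} {k : ℝ} (hk : 0 < k) (hy : ∀ t, HasDerivAt y (v t) t)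
    (hdiss : ∀ t, ⟪y t, v t⟫ ≤ -k * ‖y t‖ ^ 2) : Tendsto y atTop (𝓝 0) := by
  have hbound : ∀ t, 0 ≤ t → ‖y t‖ ^ 2 ≤ ‖y 0‖ ^ 2 * Real.exp (-(2 * k) * t) :=
    fun t ↦ le_mul_exp_of_hasDerivAt_le_mul (fun s ↦ (hy s).norm_sq)
      (fun s ↦ by nlinarith [hdiss s])
  have hexp : Tendsto (fun t ↦ ‖y 0‖ ^ 2 * Real.exp (-(2 * k) * t)) atTop (𝓝 0) := by
    simpa using (Real.tendsto_exp_atBot.comp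
      (tendsto_id.const_mul_atTop_of_neg (by linarith : -(2 * k) < 0))).const_mul (‖y 0‖ ^ 2)
  have hsq : Tendsto (fun t ↦ ‖y t‖ ^ 2) atTop (𝓝 0) :=
    squeeze_zero' (.of_forall fun t ↦ by positivity) ((eventually_ge_atTop 0).mono hbound) hexp
  rw [tendsto_zero_iff_norm_tendsto_zero]
  simpa using hsq.sqrt

section Pseudoinverse

variable {C1 : Type*} [NormedAddCommGroup C1] [InnerProductSpace ℝ C1]

theorem pinvVec_mem_orthogonal_ker (δ : C0 →ₗ[ℝ] C1) (b : C1) (hb : b ∈ LinearMap.range δ) :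
    pinvVec δ b hb ∈ (LinearMap.ker δ)ᗮ :=
  Submodule.coe_mem _

theorem map_pinvVec (δ : C0 →ₗ[ℝ] C1) (b : C1) (hb : b ∈ LinearMap.range δ) :
    δ (pinvVec δ b hb) = b := by
  have hker : hb.choose - pinvVec δ b hb ∈ LinearMap.ker δ := by
    simp only [pinvVec, Submodule.coe_orthogonalProjectionOnto_apply,
      Submodule.starProjection_orthogonal_val, sub_sub_cancel, Submodule.starProjection_apply_mem]
  calc δ (pinvVec δ b hb) = δ hb.choose - δ (hb.choose - pinvVec δ b hb) := by simp
    _ = b := by rw [LinearMap.mem_ker.mp hker, hb.choose_spec, sub_zero]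

theorem LinearMap.exists_norm_le_mul_norm_of_mem_orthogonal_ker (δ : C0 →ₗ[ℝ] C1) :
    ∃ c > 0, ∀ v ∈ (LinearMap.ker δ)ᗮ, ‖v‖ ≤ c * ‖δ v‖ := by
  have hinj : LinearMap.ker (δ ∘ₗ (LinearMap.ker δ)ᗮ.subtype) = ⊥ := by
    rw [LinearMap.ker_comp, ← Submodule.disjoint_iff_comap_eq_bot]
    exact (Submodule.orthogonal_disjoint _).symm
  obtain ⟨c, hc, hanti⟩ := (δ ∘ₗ (LinearMap.ker δ)ᗮ.subtype).exists_antilipschitzWith hinj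
  exact ⟨c, hc, fun v hv ↦ ZeroHomClass.bound_of_antilipschitz _ hanti ⟨v, hv⟩⟩

end Pseudoinverse

theorem sub_mem_orthogonal_of_hasDerivAt {F : Type*} [NormedAddCommGroup F]
    [InnerProductSpace ℝ F] {K : Submodule ℝ F} [K.HasOrthogonalProjection] {x v : ℝ → F}
    (hx : ∀ t, HasDerivAt x (v t) t) (hv : ∀ t, v t ∈ Kᗮ) (t s : ℝ) : x t - x s ∈ Kᗮ := by
  have hP : ∀ t, HasDerivAt (fun t ↦ K.starProjection (x t)) 0 t := fun t ↦ by
    simpa [Function.comp_def, (K.starProjection_apply_eq_zero_iff).mpr (hv t)] using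
      K.starProjection.hasFDerivAt.comp_hasDerivAt t (hx t)
  rw [← Submodule.starProjection_apply_eq_zero_iff, map_sub, sub_eq_zero]
  exact is_const_of_deriv_eq_zero (fun t ↦ (hP t).differentiableAt) (fun t ↦ (hP t).deriv) t s

theorem PiLp.mul_norm_sq_le_inner {ι : Type*} [Fintype ι] {F : ι → Type*}
    [∀ i, NormedAddCommGroup (F i)] [∀ i, InnerProductSpace ℝ (F i)] {μ : ℝ} {u v : PiLp 2 F}
    (h : ∀ i, μ * ‖u i‖ ^ 2 ≤ ⟪u i, v i⟫) : μ * ‖u‖ ^ 2 ≤ ⟪u, v⟫ := by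
  rw [PiLp.norm_sq_eq_of_L2, PiLp.inner_apply, Finset.mul_sum]
  exact Finset.sum_le_sum fun i _ ↦ h i

theorem PiLp.mul_norm_sub_sq_le_inner_gradient {ι : Type*} [Fintype ι] {F : ι → Type*}
    [∀ i, NormedAddCommGroup (F i)] [∀ i, InnerProductSpace ℝ (F i)] [∀ i, CompleteSpace (F i)]
    {U : ∀ i, F i → ℝ} {gU : ∀ i, F i → F i} {b : ∀ i, F i} {μ : ℝ}
    (hsc : ∀ i, StrongConvexOn Set.univ μ (U i))
    (hgrad : ∀ i y, HasGradientAt (U i) (gU i y) y) (hmin : ∀ i, IsMinOn (U i) Set.univ (b i))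
    (z : PiLp 2 F) :
    μ / 2 * ‖z - (WithLp.equiv 2 (∀ i, F i)).symm b‖ ^ 2 ≤
      ⟪z - (WithLp.equiv 2 (∀ i, F i)).symm b,
        (WithLp.equiv 2 (∀ i, F i)).symm (fun i ↦ gU i (z i))⟫ :=
  PiLp.mul_norm_sq_le_inner fun i ↦ by
    simpa using (hsc i).mul_norm_sub_sq_le_inner_of_isMinOn (hgrad i (z i)) (hmin i)

theorem LinearMap.mul_norm_sq_div_le_inner_adjoint {C1 : Type*} [NormedAddCommGroup C1]
    [InnerProductSpace ℝ C1] [FiniteDimensional ℝ C1] (δ : C0 →ₗ[ℝ] C1) {c μ : ℝ} (hμ : 0 ≤ μ)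
    {y : C0} {w : C1} (hy : ‖y‖ ≤ c * ‖δ y‖) (hw : μ * ‖δ y‖ ^ 2 ≤ ⟪δ y, w⟫) :
    μ / c ^ 2 * ‖y‖ ^ 2 ≤ ⟪y, LinearMap.adjoint δ w⟫ := by
  have hsq : ‖y‖ ^ 2 ≤ c ^ 2 * ‖δ y‖ ^ 2 := by
    simpa [mul_pow] using pow_le_pow_left₀ (norm_nonneg _) hy 2
  rw [LinearMap.adjoint_inner_right, div_mul_eq_mul_div]
  refine (div_le_of_le_mul₀ (by positivity) (by positivity) ?_).trans hw
  calc μ * ‖y‖ ^ 2 ≤ μ * (c ^ 2 * ‖δ y‖ ^ 2) := by gcongr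
    _ = μ * ‖δ y‖ ^ 2 * c ^ 2 := by ring

theorem gradient_flow_converges_to_projection
    (δ : C0 →ₗ[ℝ] PiLp 2 Es)
    (Ue : ∀ e, Es e → ℝ) (gUe : ∀ e, Es e → Es e) (b : ∀ e, Es e)
    (m : E → ℝ) (hm : ∀ e, 0 < m e)
    (hsc : ∀ e, StrongConvexOn Set.univ (m e) (Ue e))
    (hgrad : ∀ e (y : Es e), HasGradientAt (Ue e) (gUe e y) y)
    (hbmin : ∀ e, IsMinOn (Ue e) Set.univ (b e))
    (hrange : (WithLp.equiv 2 (∀ e, Es e)).symm b ∈ LinearMap.range δ)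
    (α : ℝ) (hα : 0 < α)
    (x : ℝ → C0)
    (hx : ∀ t : ℝ, HasDerivAt x
      (-(α • (LinearMap.adjoint δ
        ((WithLp.equiv 2 (∀ e, Es e)).symm (fun e => gUe e ((δ (x t)) e)))))) t) :
    Tendsto x atTop (nhds
      ((Submodule.orthogonalProjectionOnto (LinearMap.ker δ) (x 0) : C0) +
        pinvVec δ ((WithLp.equiv 2 (∀ e, Es e)).symm b) hrange)) := by
  set K := LinearMap.ker δ
  set b' := (WithLp.equiv 2 (∀ e, Es e)).symm b
  set w : ℝ → PiLp 2 Es := fun t ↦ (WithLp.equiv 2 (∀ e, Es e)).symm (fun e ↦ gUe e (δ (x t) e))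
  set L := (K.orthogonalProjectionOnto (x 0) : C0) + pinvVec δ b' hrange
  obtain ⟨μ, hμ, hμm⟩ := exists_pos_forall_le_of_finite hm
  obtain ⟨c, hc, hcδ⟩ := δ.exists_norm_le_mul_norm_of_mem_orthogonal_ker
  have hδL : δ L = b' := by
    simp [L, map_pinvVec, LinearMap.mem_ker.mp (K.starProjection_apply_mem (x 0))]
  have hyK : ∀ t, x t - L ∈ Kᗮ := fun t ↦ by
    have hflow : x t - x 0 ∈ Kᗮ := sub_mem_orthogonal_of_hasDerivAt hx (fun s ↦ by
      rw [LinearMap.orthogonal_ker]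
      exact neg_mem (Submodule.smul_mem _ _ (LinearMap.mem_range_self _ _))) t 0
    have hsplit : x t - L =
        (x t - x 0) + (x 0 - K.starProjection (x 0)) - pinvVec δ b' hrange := by
      simp only [L, Submodule.starProjection_apply]; abel
    rw [hsplit]
    exact sub_mem (add_mem hflow (K.sub_starProjection_mem_orthogonal _))
      (pinvVec_mem_orthogonal_ker δ b' hrange)
  have hdiss : ∀ t, ⟪x t - L, -(α • LinearMap.adjoint δ (w t))⟫ ≤
      -(α * (μ / 2 / c ^ 2)) * ‖x t - L‖ ^ 2 := fun t ↦ by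
    have hcoer : μ / 2 * ‖δ (x t - L)‖ ^ 2 ≤ ⟪δ (x t - L), w t⟫ := by
      rw [map_sub, hδL]
      exact PiLp.mul_norm_sub_sq_le_inner_gradient (fun e ↦ (hsc e).mono (hμm e)) hgrad hbmin _
    have := δ.mul_norm_sq_div_le_inner_adjoint (by positivity) (hcδ _ (hyK t)) hcoer
    rw [inner_neg_right, real_inner_smul_right, neg_mul, neg_le_neg_iff, mul_assoc]
    exact mul_le_mul_of_nonneg_left this hα.le
  simpa [L] using
    (tendsto_zero_of_inner_hasDerivAt_le (by positivity) (fun t ↦ (hx t).sub_const L)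
      hdiss).add_const L
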